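/- arXiv:2106.11101 — 4 statements merged into one kernel-verified Lean document; each statement's English description precedes it below -/
import Mathlib

section
/- Let J ≥ 0 be an integer and let α be a real number with 0 < α < π. Then I − P(α) is positive definite, where I is the (2J+1)×(2J+1) identity matrix and P(α) is the prolate matrix. -/
/-!
With `T_x(θ) = ∑ₙ xₙ e^{inθ}`, the prolate quadratic form is
`xᵀ P(β) x = (2π)⁻¹ ∫_{-β}^{β} |T_x(θ)|² dθ`, and `P(π) = I`. Hence
`xᵀ (I - P(α)) x = (2π)⁻¹ (∫_{-π}^{-α} + ∫_{α}^{π}) |T_x(θ)|² dθ`.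
For `x ≠ 0`, `T_x(θ)` is a nonzero polynomial evaluated at `e^{iθ}`; it has finitely many roots,
while `θ ↦ e^{iθ}` is injective on `(α, π)`, so the continuous integrand is positive somewhere
on `(α, π)`.
-/

/-- The prolate matrix entry `p_{mn}(α)`: `α/π` for `m = n` and
`sin((m−n)α)/(π(m−n))` for `m ≠ n`. -/
noncomputable def prolateR (α : ℝ) (m n : ℤ) : ℝ :=
  if m = n then α / Real.pi
  else Real.sin (((m - n : ℤ) : ℝ) * α) / (Real.pi * ((m - n : ℤ) : ℝ))

/-- The `(2J+1) × (2J+1)` prolate matrix `P(α)` indexed by `m, n ∈ {−J, …, J}`. -/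
noncomputable def prolateMatrix (α : ℝ) (J : ℕ) :
    Matrix (Fin (2 * J + 1)) (Fin (2 * J + 1)) ℝ :=
  Matrix.of fun i j => prolateR α (((i : ℕ) : ℤ) - (J : ℤ)) (((j : ℕ) : ℤ) - (J : ℤ))

open Complex Polynomial Matrix intervalIntegral

lemma prolateR_eq_integral (β : ℝ) (m n : ℤ) :
    prolateR β m n = (2 * Real.pi)⁻¹ * ∫ θ in -β..β, Real.cos (((m : ℝ) - n) * θ) := by
  have hk : ((m : ℝ) - n = 0 ↔ m = n) := by norm_cast; exact sub_eq_zero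
  rw [prolateR]
  split_ifs with h
  · simp [h, two_mul]
    field_simp
  · rw [integral_comp_mul_left Real.cos (hk.not.mpr h), integral_cos, mul_neg, Real.sin_neg]
    push_cast
    field_simp
    ring

lemma prolateR_comm (β : ℝ) (m n : ℤ) : prolateR β m n = prolateR β n m := by
  simp only [prolateR_eq_integral, ← Real.cos_neg (((n : ℝ) - m) * _), ← neg_mul, neg_sub]

lemma prolateR_sub_right (β : ℝ) (m n c : ℤ) : prolateR β (m - c) (n - c) = prolateR β m n := by
  simp only [prolateR, sub_left_inj, sub_sub_sub_cancel_right]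

lemma prolateR_pi (m n : ℤ) : prolateR Real.pi m n = if m = n then 1 else 0 := by
  rw [prolateR]
  split_ifs
  · exact div_self Real.pi_ne_zero
  · rw [Real.sin_int_mul_pi, zero_div]

lemma prolateMatrix_eq_of (β : ℝ) (J : ℕ) :
    prolateMatrix β J = of fun i j : Fin (2 * J + 1) => prolateR β (i : ℕ) (j : ℕ) := by
  ext i j
  exact prolateR_sub_right _ _ _ _

lemma prolateMatrix_pi (J : ℕ) : prolateMatrix Real.pi J = 1 := by
  ext i j
  simp [prolateMatrix_eq_of, prolateR_pi, one_apply, Fin.val_inj]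

lemma prolateMatrix_isHermitian (β : ℝ) (J : ℕ) : (prolateMatrix β J).IsHermitian := by
  ext i j
  exact prolateR_comm _ _ _

section
variable {ι : Type*} [Fintype ι]

lemma normSq_sum_mul_exp (x k : ι → ℝ) (θ : ℝ) :
    normSq (∑ i, x i * exp (k i * θ * I)) = ∑ i, ∑ j, x i * x j * Real.cos ((k i - k j) * θ) := by
  have hsum : ∑ i, (x i : ℂ) * exp (k i * θ * I)
      = ((∑ i, x i * Real.cos (k i * θ) : ℝ) : ℂ)
        + ((∑ i, x i * Real.sin (k i * θ) : ℝ) : ℂ) * I := by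
    push_cast
    rw [Finset.sum_mul, ← Finset.sum_add_distrib]
    refine Finset.sum_congr rfl fun i _ => ?_
    rw [← ofReal_mul, exp_mul_I, ← ofReal_cos, ← ofReal_sin]
    ring
  rw [hsum, normSq_add_mul_I, sq, sq, Finset.sum_mul_sum, Finset.sum_mul_sum,
    ← Finset.sum_add_distrib]
  refine Finset.sum_congr rfl fun i _ => ?_
  rw [← Finset.sum_add_distrib]
  refine Finset.sum_congr rfl fun j _ => ?_
  rw [sub_mul, Real.cos_sub]
  ring

lemma dotProduct_of_prolateR_mulVec (β : ℝ) (k : ι → ℤ) (x : ι → ℝ) :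
    x ⬝ᵥ (of (fun i j => prolateR β (k i) (k j)) *ᵥ x)
      = (2 * Real.pi)⁻¹ * ∫ θ in -β..β, normSq (∑ i, x i * exp (k i * θ * I)) := by
  have hint : ∀ c : ℝ,
      IntervalIntegrable (fun θ => Real.cos (c * θ)) MeasureTheory.volume (-β) β :=
    fun c => (by fun_prop : Continuous fun θ => Real.cos (c * θ)).intervalIntegrable _ _
  have hsq := normSq_sum_mul_exp x (fun i => (k i : ℝ))
  simp only [ofReal_intCast] at hsq
  simp only [hsq]
  rw [integral_finsetSum fun i _ => (by fun_prop : Continuous fun θ => ∑ j, x i * x j *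
    Real.cos (((k i : ℝ) - k j) * θ)).intervalIntegrable _ _]
  simp only [integral_finsetSum fun j _ => (hint _).const_mul _, integral_const_mul,
    dotProduct, mulVec, of_apply, prolateR_eq_integral, Finset.mul_sum]
  refine Finset.sum_congr rfl fun i _ => Finset.sum_congr rfl fun j _ => ?_
  ring
end

lemma exists_mem_Ioo_eval_exp_mul_I_ne_zero {p : ℂ[X]} (hp : p ≠ 0) {a b : ℝ} (hab : a < b) :
    ∃ θ ∈ Set.Ioo a b, p.eval (exp (θ * I)) ≠ 0 := by
  set c := min b (a + 2 * Real.pi)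
  have hac : a < c := lt_min hab (by linarith [Real.pi_pos])
  have hinj : Set.InjOn (fun θ : ℝ => exp (θ * I)) (Set.Ioo a c) := fun s hs t ht hst =>
    Circle.exp_injOn_Ioc (sub_le_iff_le_add'.mpr (min_le_right _ _))
      (Set.Ioo_subset_Ioc_self hs) (Set.Ioo_subset_Ioc_self ht) (Circle.ext (by simpa using hst))
  obtain ⟨_, ⟨θ, hθ, rfl⟩, hroot⟩ :=
    ((Set.Ioo_infinite hac).image hinj).exists_notMem_finset p.roots.toFinset
  refine ⟨θ, Set.Ioo_subset_Ioo_right (min_le_left _ _) hθ, fun h => hroot ?_⟩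
  simpa [hp] using h

lemma sum_C_mul_X_pow_ne_zero {R : Type*} [Semiring R] {N : ℕ} {x : Fin N → R} (hx : x ≠ 0) :
    ∑ i : Fin N, C (x i) * X ^ (i : ℕ) ≠ 0 := by
  refine fun h => hx (funext fun j => ?_)
  simpa [finsetSum_coeff, coeff_C_mul_X_pow, Fin.val_inj] using congrArg (coeff · j) h

lemma integral_normSq_sum_mul_exp_pos {N : ℕ} {x : Fin N → ℝ} (hx : x ≠ 0) {a b : ℝ}
    (hab : a < b) :
    0 < ∫ θ in a..b, normSq (∑ i : Fin N, x i * exp ((i : ℕ) * θ * I)) := by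
  have hp := sum_C_mul_X_pow_ne_zero (x := fun i => (x i : ℂ)) (by simpa [funext_iff] using hx)
  have heval : ∀ θ : ℝ, ∑ i : Fin N, x i * exp ((i : ℕ) * θ * I)
      = (∑ i : Fin N, C (x i : ℂ) * X ^ (i : ℕ)).eval (exp (θ * I)) := by
    simp [eval_finsetSum, ← exp_nat_mul, mul_assoc]
  obtain ⟨θ, hθ, hne⟩ := exists_mem_Ioo_eval_exp_mul_I_ne_zero hp hab
  refine integral_pos hab (by fun_prop) (fun _ _ => normSq_nonneg _)
    ⟨θ, Set.Ioo_subset_Icc_self hθ, ?_⟩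
  rw [heval]
  exact normSq_pos.mpr hne

theorem stmt_4_general (J : ℕ) (α : ℝ) (h2 : α < Real.pi) :
    ((1 : Matrix (Fin (2 * J + 1)) (Fin (2 * J + 1)) ℝ) - prolateMatrix α J).PosDef := by
  refine posDef_iff_dotProduct_mulVec.mpr
    ⟨isHermitian_one.sub (prolateMatrix_isHermitian α J), fun x hx => ?_⟩
  set g := fun θ : ℝ => normSq (∑ i : Fin (2 * J + 1), x i * exp ((i : ℕ) * θ * I))
  have hg : ∀ a b, IntervalIntegrable g MeasureTheory.volume a b :=
    fun a b => (by fun_prop : Continuous g).intervalIntegrable a b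
  have hquad : ∀ β, x ⬝ᵥ (prolateMatrix β J *ᵥ x) = (2 * Real.pi)⁻¹ * ∫ θ in -β..β, g θ := by
    intro β
    rw [prolateMatrix_eq_of, dotProduct_of_prolateR_mulVec]
    simp only [Int.cast_natCast, g]
  have hsplit : (∫ θ in -Real.pi..Real.pi, g θ) - ∫ θ in -α..α, g θ
      = (∫ θ in α..Real.pi, g θ) + ∫ θ in -Real.pi..-α, g θ := by
    rw [integral_interval_sub_interval_comm' (hg _ _) (hg _ _) (hg _ _), integral_symm (-Real.pi),
      sub_neg_eq_add]
  have hleft : 0 ≤ ∫ θ in -Real.pi..-α, g θ :=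
    integral_nonneg (by linarith) fun θ _ => normSq_nonneg _
  have hright : 0 < ∫ θ in α..Real.pi, g θ := integral_normSq_sum_mul_exp_pos hx h2
  rw [star_trivial, sub_mulVec, dotProduct_sub, ← prolateMatrix_pi J, hquad, hquad, ← mul_sub,
    hsplit]
  positivity

/-- For `0 < α < π` the matrix `I − P(α)` is positive definite. -/
theorem stmt_4 (J : ℕ) (α : ℝ) (h1 : 0 < α) (h2 : α < Real.pi) :
    ((1 : Matrix (Fin (2 * J + 1)) (Fin (2 * J + 1)) ℝ) - prolateMatrix α J).PosDef :=
  stmt_4_general J α h2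
end

section
/- Let J ≥ 0 be an integer, α a real number, σ a real number, and v a real vector indexed by {−J, …, J}. If P(α) v = σ v, then P(π−α) (D v) = (1−σ) (D v), where D v is the vector with entries (D v)_m = (−1)^m v_m. Consequently σ is an eigenvalue of the prolate matrix P(α) if and only if 1−σ is an eigenvalue of P(π−α). -/
lemma prolateR_flip (α : ℝ) (m n : ℤ) :
    prolateR (Real.pi - α) m n
      = (if m = n then 1 else 0) - (-1 : ℝ) ^ (m - n) * prolateR α m n := by
  unfold prolateR
  by_cases h : m = n
  · subst h
    simp [sub_div, div_self Real.pi_ne_zero]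
  · simp only [h, if_false]
    have hsin : Real.sin (((m - n : ℤ) : ℝ) * (Real.pi - α))
        = -((-1 : ℝ) ^ (m - n) * Real.sin (((m - n : ℤ) : ℝ) * α)) := by
      rw [mul_sub]
      have := Real.sin_int_mul_pi_sub (((m - n : ℤ) : ℝ) * α) (m - n)
      simpa using this
    rw [hsin]
    ring

lemma key (J : ℕ) (α σ : ℝ) (v : Fin (2 * J + 1) → ℝ)
    (hv : (prolateMatrix α J).mulVec v = σ • v) :
    (prolateMatrix (Real.pi - α) J).mulVec
        (fun i : Fin (2 * J + 1) => (-1 : ℝ) ^ (((i : ℕ) : ℤ) - (J : ℤ)) * v i)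
      = (1 - σ) • (fun i : Fin (2 * J + 1) => (-1 : ℝ) ^ (((i : ℕ) : ℤ) - (J : ℤ)) * v i) := by
  funext i
  have hvi := congrFun hv i
  simp only [Matrix.mulVec, dotProduct, Pi.smul_apply, smul_eq_mul, prolateMatrix,
    Matrix.of_apply] at hvi ⊢
  have hneg : (-1 : ℝ) ≠ 0 := by norm_num
  calc ∑ j : Fin (2 * J + 1), prolateR (Real.pi - α) (((i : ℕ) : ℤ) - J) (((j : ℕ) : ℤ) - J)
          * ((-1 : ℝ) ^ (((j : ℕ) : ℤ) - (J : ℤ)) * v j)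
      = ∑ j : Fin (2 * J + 1), ((if i = j then 1 else 0) * ((-1 : ℝ) ^ (((j : ℕ) : ℤ) - (J : ℤ)) * v j)
          - (-1 : ℝ) ^ (((i : ℕ) : ℤ) - (J : ℤ))
            * (prolateR α (((i : ℕ) : ℤ) - J) (((j : ℕ) : ℤ) - J) * v j)) := by
        refine Finset.sum_congr rfl fun j _ => ?_
        rw [prolateR_flip]
        have hiff : ((((i : ℕ) : ℤ) - J = ((j : ℕ) : ℤ) - J)) = (i = j) := by
          simp [sub_left_inj, Fin.ext_iff]
        simp only [hiff]
        have hz : (-1 : ℝ) ^ ((((i : ℕ) : ℤ) - J) - ((((j : ℕ) : ℤ)) - J))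
            * (-1 : ℝ) ^ (((j : ℕ) : ℤ) - (J : ℤ)) = (-1 : ℝ) ^ (((i : ℕ) : ℤ) - (J : ℤ)) := by
          rw [← zpow_add₀ hneg]
          ring_nf
        rw [sub_mul]
        congr 1
        calc (-1 : ℝ) ^ ((((i : ℕ) : ℤ) - J) - ((((j : ℕ) : ℤ)) - J))
              * prolateR α (((i : ℕ) : ℤ) - J) (((j : ℕ) : ℤ) - J)
              * ((-1 : ℝ) ^ (((j : ℕ) : ℤ) - (J : ℤ)) * v j)
            = ((-1 : ℝ) ^ ((((i : ℕ) : ℤ) - J) - ((((j : ℕ) : ℤ)) - J))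
              * (-1 : ℝ) ^ (((j : ℕ) : ℤ) - (J : ℤ)))
              * (prolateR α (((i : ℕ) : ℤ) - J) (((j : ℕ) : ℤ) - J) * v j) := by ring
          _ = _ := by rw [hz]
    _ = (-1 : ℝ) ^ (((i : ℕ) : ℤ) - (J : ℤ)) * v i
          - (-1 : ℝ) ^ (((i : ℕ) : ℤ) - (J : ℤ))
            * ∑ j : Fin (2 * J + 1), prolateR α (((i : ℕ) : ℤ) - J) (((j : ℕ) : ℤ) - J) * v j := by
        rw [Finset.sum_sub_distrib, ← Finset.mul_sum]
        congr 1
        simp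
    _ = (1 - σ) * ((-1 : ℝ) ^ (((i : ℕ) : ℤ) - (J : ℤ)) * v i) := by
        rw [hvi]; ring

lemma Dne (J : ℕ) (u : Fin (2 * J + 1) → ℝ) (hu : u ≠ 0) :
    (fun i : Fin (2 * J + 1) => (-1 : ℝ) ^ (((i : ℕ) : ℤ) - (J : ℤ)) * u i) ≠ 0 := by
  intro h
  apply hu
  funext i
  have := congrFun h i
  simp only [Pi.zero_apply, mul_eq_zero] at this
  rcases this with h1 | h2
  · exact absurd h1 (zpow_ne_zero _ (by norm_num))
  · exact h2

/-- If `P(α) v = σ v`, then `P(π−α) (D v) = (1−σ) (D v)` where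
`(D v)_m = (−1)^m v_m`; consequently `σ` is an eigenvalue of `P(α)` iff `1−σ` is an
eigenvalue of `P(π−α)`. -/
theorem stmt_6 (J : ℕ) (α σ : ℝ) (v : Fin (2 * J + 1) → ℝ)
    (hv : (prolateMatrix α J).mulVec v = σ • v) :
    (prolateMatrix (Real.pi - α) J).mulVec
        (fun i : Fin (2 * J + 1) => (-1 : ℝ) ^ (((i : ℕ) : ℤ) - (J : ℤ)) * v i)
      = (1 - σ) • (fun i : Fin (2 * J + 1) => (-1 : ℝ) ^ (((i : ℕ) : ℤ) - (J : ℤ)) * v i)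
    ∧ ((∃ u : Fin (2 * J + 1) → ℝ, u ≠ 0 ∧ (prolateMatrix α J).mulVec u = σ • u) ↔
        (∃ w : Fin (2 * J + 1) → ℝ, w ≠ 0 ∧
          (prolateMatrix (Real.pi - α) J).mulVec w = (1 - σ) • w)) := by
  refine ⟨key J α σ v hv, ?_, ?_⟩
  · rintro ⟨u, hu0, hu⟩
    exact ⟨_, Dne J u hu0, key J α σ u hu⟩
  · rintro ⟨w, hw0, hw⟩
    have := key J (Real.pi - α) (1 - σ) w hw
    rw [sub_sub_cancel, sub_sub_cancel] at this
    exact ⟨_, Dne J w hw0, this⟩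
end

section
/- Let J ≥ 0 be an integer and let α be a real number with 0 < α < π. If σ is a real number and v a nonzero real vector indexed by {−J, …, J} with P(α) v = σ v, then 0 < σ < 1. In other words, every eigenvalue of the prolate matrix P(α) lies in the open interval (0, 1). -/
namespace Stmt7Aux

open Real MeasureTheory Finset Function intervalIntegral

lemma analyticAt_ccos (z : ℂ) : AnalyticAt ℂ Complex.cos z := by
  have h : Complex.cos = fun z : ℂ =>
      (Complex.exp (z * Complex.I) + Complex.exp (-z * Complex.I)) / 2 := rfl
  rw [h]
  exact ((analyticAt_cexp.comp (analyticAt_id.mul analyticAt_const)).add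
    (analyticAt_cexp.comp (analyticAt_id.neg.mul analyticAt_const))).div
    analyticAt_const (by norm_num)

lemma analyticAt_csin (z : ℂ) : AnalyticAt ℂ Complex.sin z := by
  have h : Complex.sin = fun z : ℂ =>
      (Complex.exp (-z * Complex.I) - Complex.exp (z * Complex.I)) * Complex.I / 2 := rfl
  rw [h]
  exact (((analyticAt_cexp.comp (analyticAt_id.neg.mul analyticAt_const)).sub
    (analyticAt_cexp.comp (analyticAt_id.mul analyticAt_const))).mul
    analyticAt_const).div analyticAt_const (by norm_num)

lemma analyticAt_rcos (x : ℝ) : AnalyticAt ℝ Real.cos x := by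
  have h : Real.cos = fun x : ℝ => Complex.reCLM (Complex.cos (Complex.ofRealCLM x)) := by
    funext x; rfl
  rw [h]
  exact (Complex.reCLM.analyticAt _).comp
    (((analyticAt_ccos _).restrictScalars).comp (Complex.ofRealCLM.analyticAt x))

lemma analyticAt_rsin (x : ℝ) : AnalyticAt ℝ Real.sin x := by
  have h : Real.sin = fun x : ℝ => Complex.reCLM (Complex.sin (Complex.ofRealCLM x)) := by
    funext x; rfl
  rw [h]
  exact (Complex.reCLM.analyticAt _).comp
    (((analyticAt_csin _).restrictScalars).comp (Complex.ofRealCLM.analyticAt x))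

variable {J : ℕ}

/-- The real frequency `m_i = i - J` of index `i`. -/
noncomputable def freq (J : ℕ) (i : Fin (2 * J + 1)) : ℝ := (i : ℝ) - J

/-- The nonnegative trigonometric polynomial `|∑ v_i e^{i m_i θ}|²`. -/
noncomputable def Fq (J : ℕ) (v : Fin (2 * J + 1) → ℝ) (θ : ℝ) : ℝ :=
  (∑ i, v i * Real.cos (freq J i * θ)) ^ 2 + (∑ i, v i * Real.sin (freq J i * θ)) ^ 2

lemma Fq_nonneg (v : Fin (2 * J + 1) → ℝ) (θ : ℝ) : 0 ≤ Fq J v θ :=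
  add_nonneg (sq_nonneg _) (sq_nonneg _)

lemma Fq_eq (v : Fin (2 * J + 1) → ℝ) (θ : ℝ) :
    Fq J v θ = ∑ i, ∑ j, v i * v j * Real.cos ((freq J i - freq J j) * θ) := by
  unfold Fq
  rw [sq, sq, Finset.sum_mul_sum, Finset.sum_mul_sum, ← Finset.sum_add_distrib]
  refine Finset.sum_congr rfl fun i _ => ?_
  rw [← Finset.sum_add_distrib]
  refine Finset.sum_congr rfl fun j _ => ?_
  rw [sub_mul, Real.cos_sub]
  ring

lemma Fq_cont (v : Fin (2 * J + 1) → ℝ) : Continuous (Fq J v) := by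
  unfold Fq
  fun_prop

lemma Fq_analytic (v : Fin (2 * J + 1) → ℝ) (x : ℝ) : AnalyticAt ℝ (Fq J v) x := by
  unfold Fq
  refine AnalyticAt.add (AnalyticAt.pow ?_ 2) (AnalyticAt.pow ?_ 2)
  · exact Finset.analyticAt_fun_sum _ fun i _ => analyticAt_const.mul
      ((analyticAt_rcos _).comp (analyticAt_const.mul analyticAt_id))
  · exact Finset.analyticAt_fun_sum _ fun i _ => analyticAt_const.mul
      ((analyticAt_rsin _).comp (analyticAt_const.mul analyticAt_id))

lemma integral_cos_symm (k β : ℝ) :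
    (∫ θ in (-β)..β, Real.cos (k * θ)) =
      if k = 0 then 2 * β else 2 * Real.sin (k * β) / k := by
  rcases eq_or_ne k 0 with hk | hk
  · simp [hk, two_mul]
  · rw [if_neg hk, intervalIntegral.integral_comp_mul_left (fun x => Real.cos x) hk,
      integral_cos, mul_neg, Real.sin_neg, smul_eq_mul]
    field_simp
    ring

lemma Fq_integral (v : Fin (2 * J + 1) → ℝ) (β : ℝ) :
    (∫ θ in (-β)..β, Fq J v θ) =
      ∑ i, ∑ j, v i * v j *
        (if freq J i = freq J j then 2 * β
         else 2 * Real.sin ((freq J i - freq J j) * β) / (freq J i - freq J j)) := by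
  have hcont : ∀ (i j : Fin (2 * J + 1)),
      Continuous fun θ => v i * v j * Real.cos ((freq J i - freq J j) * θ) := by
    intro i j; fun_prop
  rw [intervalIntegral.integral_congr (g := fun θ =>
      ∑ i, ∑ j, v i * v j * Real.cos ((freq J i - freq J j) * θ))
      (fun θ _ => Fq_eq v θ)]
  rw [intervalIntegral.integral_finset_sum (fun i _ =>
    (continuous_finset_sum _ fun j _ => hcont i j).intervalIntegrable _ _)]
  refine Finset.sum_congr rfl fun i _ => ?_
  rw [intervalIntegral.integral_finset_sum (fun j _ =>
    (hcont i j).intervalIntegrable _ _)]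
  refine Finset.sum_congr rfl fun j _ => ?_
  rw [intervalIntegral.integral_const_mul, integral_cos_symm]
  congr 1
  simp [sub_eq_zero]

lemma freq_eq_iff (i j : Fin (2 * J + 1)) : freq J i = freq J j ↔ i = j := by
  unfold freq
  constructor
  · intro h
    have : (i : ℝ) = (j : ℝ) := by linarith
    exact_mod_cast Fin.ext (by exact_mod_cast this)
  · rintro rfl; rfl

lemma Fq_integral_pi (v : Fin (2 * J + 1) → ℝ) :
    (∫ θ in (-Real.pi)..Real.pi, Fq J v θ) = 2 * Real.pi * ∑ i, v i ^ 2 := by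
  rw [Fq_integral]
  have hzero : ∀ (i j : Fin (2 * J + 1)), freq J i ≠ freq J j →
      Real.sin ((freq J i - freq J j) * Real.pi) = 0 := by
    intro i j _
    have : freq J i - freq J j = (((i : ℤ) - (j : ℤ) : ℤ) : ℝ) := by
      unfold freq; push_cast; ring
    rw [this]
    exact Real.sin_int_mul_pi _
  rw [Finset.mul_sum]
  refine Finset.sum_congr rfl fun i _ => ?_
  rw [Finset.sum_eq_single i]
  · rw [if_pos rfl]; ring
  · intro j _ hj
    rw [if_neg (fun h => hj ((freq_eq_iff i j).mp h).symm),
      hzero i j (fun h => hj ((freq_eq_iff i j).mp h).symm)]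
    ring
  · intro h; exact absurd (Finset.mem_univ i) h

lemma sum_sq_pos (v : Fin (2 * J + 1) → ℝ) (hv0 : v ≠ 0) : 0 < ∑ i, v i ^ 2 := by
  obtain ⟨i, hi⟩ : ∃ i, v i ≠ 0 := by
    by_contra h; push_neg at h; exact hv0 (funext h)
  exact Finset.sum_pos' (fun j _ => sq_nonneg _)
    ⟨i, Finset.mem_univ i, by positivity⟩

lemma Fq_integral_pos (v : Fin (2 * J + 1) → ℝ) (hv0 : v ≠ 0) (a b : ℝ) (hab : a < b) :
    0 < ∫ θ in a..b, Fq J v θ := by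
  have hc := Fq_cont v
  rw [intervalIntegral.integral_pos_iff_support_of_nonneg_ae
    (Filter.Eventually.of_forall (Fq_nonneg v)) (hc.intervalIntegrable a b)]
  refine ⟨hab, ?_⟩
  have hne : ∃ θ ∈ Set.Ioo a b, Fq J v θ ≠ 0 := by
    by_contra h
    push_neg at h
    have hA : AnalyticOnNhd ℝ (Fq J v) Set.univ := fun x _ => Fq_analytic v x
    have hmid : (a + b) / 2 ∈ Set.Ioo a b := ⟨by linarith, by linarith⟩
    have hfr : ∃ᶠ z in nhdsWithin ((a + b) / 2) {((a + b) / 2)}ᶜ, Fq J v z = 0 := by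
      refine Filter.Eventually.frequently ?_
      have hmem : Set.Ioo a b ∈ nhdsWithin ((a + b) / 2) {((a + b) / 2)}ᶜ :=
        nhdsWithin_le_nhds (isOpen_Ioo.mem_nhds hmid)
      filter_upwards [hmem] with z hz using h z hz
    have hzero := hA.eqOn_zero_of_preconnected_of_frequently_eq_zero
      isPreconnected_univ (Set.mem_univ ((a + b) / 2)) hfr
    have hF0 : Fq J v = fun _ => 0 := funext fun θ => hzero (Set.mem_univ θ)
    have h0 : (∫ θ in (-Real.pi)..Real.pi, Fq J v θ) = 0 := by rw [hF0]; simp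
    rw [Fq_integral_pi] at h0
    have hS := sum_sq_pos v hv0
    have hπ := Real.pi_pos
    nlinarith
  obtain ⟨θ₀, hθ₀, hFθ₀⟩ := hne
  have hopen : IsOpen (support (Fq J v) ∩ Set.Ioo a b) :=
    hc.isOpen_support.inter isOpen_Ioo
  exact lt_of_lt_of_le (hopen.measure_pos volume ⟨θ₀, hFθ₀, hθ₀⟩)
    (measure_mono (Set.inter_subset_inter_right _ Set.Ioo_subset_Ioc_self))

lemma Fq_integral_alpha (α : ℝ) (v : Fin (2 * J + 1) → ℝ) :
    (∫ θ in (-α)..α, Fq J v θ) =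
      2 * Real.pi * ∑ i, ∑ j, v i * prolateMatrix α J i j * v j := by
  rw [Fq_integral, Finset.mul_sum]
  refine Finset.sum_congr rfl fun i _ => ?_
  rw [Finset.mul_sum]
  refine Finset.sum_congr rfl fun j _ => ?_
  have hπ := Real.pi_ne_zero
  have hcast : (((((i : ℕ) : ℤ) - (J : ℤ)) - (((j : ℕ) : ℤ) - (J : ℤ)) : ℤ) : ℝ)
      = freq J i - freq J j := by unfold freq; push_cast; ring
  have hcond : ((((i : ℕ) : ℤ) - (J : ℤ)) = (((j : ℕ) : ℤ) - (J : ℤ))) ↔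
      freq J i = freq J j := by
    unfold freq
    constructor
    · intro h
      have : ((i : ℕ) : ℤ) = ((j : ℕ) : ℤ) := by omega
      have : ((i : ℕ) : ℝ) = ((j : ℕ) : ℝ) := by exact_mod_cast this
      linarith
    · intro h
      have : ((i : ℕ) : ℝ) = ((j : ℕ) : ℝ) := by linarith
      have : ((i : ℕ) : ℤ) = ((j : ℕ) : ℤ) := by exact_mod_cast this
      omega
  show _ = 2 * Real.pi * (v i * prolateR α (((i : ℕ) : ℤ) - (J : ℤ))
    (((j : ℕ) : ℤ) - (J : ℤ)) * v j)
  unfold prolateR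
  by_cases h : freq J i = freq J j
  · rw [if_pos h, if_pos (hcond.mpr h)]
    field_simp
  · rw [if_neg h, if_neg (fun hc => h (hcond.mp hc)), hcast]
    have hne : freq J i - freq J j ≠ 0 := sub_ne_zero.mpr h
    field_simp

end Stmt7Aux

open Stmt7Aux MeasureTheory in
/-- For `0 < α < π`, every eigenvalue of the prolate matrix `P(α)`
lies in the open interval `(0, 1)`. -/
theorem stmt_7 (J : ℕ) (α : ℝ) (h1 : 0 < α) (h2 : α < Real.pi) (σ : ℝ)
    (v : Fin (2 * J + 1) → ℝ) (hv0 : v ≠ 0)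
    (hv : (prolateMatrix α J).mulVec v = σ • v) :
    0 < σ ∧ σ < 1 := by
  have hπ := Real.pi_pos
  set S := ∑ i, v i ^ 2 with hSdef
  have hS : 0 < S := sum_sq_pos v hv0
  have heig : ∀ i, (∑ j, prolateMatrix α J i j * v j) = σ * v i := by
    intro i
    have := congrFun hv i
    simpa [Matrix.mulVec, dotProduct] using this
  have hquad : (∑ i, ∑ j, v i * prolateMatrix α J i j * v j) = σ * S := by
    rw [hSdef, Finset.mul_sum]
    refine Finset.sum_congr rfl fun i _ => ?_
    calc (∑ j, v i * prolateMatrix α J i j * v j)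
        = v i * ∑ j, prolateMatrix α J i j * v j := by
          rw [Finset.mul_sum]; exact Finset.sum_congr rfl fun j _ => by ring
      _ = v i * (σ * v i) := by rw [heig i]
      _ = σ * v i ^ 2 := by ring
  have hIα : (∫ θ in (-α)..α, Fq J v θ) = 2 * Real.pi * (σ * S) := by
    rw [Fq_integral_alpha, hquad]
  have hIπ : (∫ θ in (-Real.pi)..Real.pi, Fq J v θ) = 2 * Real.pi * S :=
    Fq_integral_pi v
  have hpos1 : 0 < ∫ θ in (-α)..α, Fq J v θ :=
    Fq_integral_pos v hv0 _ _ (by linarith)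
  have hσpos : 0 < σ := by
    rw [hIα] at hpos1
    rcases lt_or_ge 0 σ with h | h
    · exact h
    · exfalso
      have hns : σ * S ≤ 0 := mul_nonpos_iff.mpr (Or.inr ⟨h, hS.le⟩)
      nlinarith
  have hint : ∀ a b : ℝ, IntervalIntegrable (Fq J v) volume a b :=
    fun a b => (Fq_cont v).intervalIntegrable a b
  have hsplit : (∫ θ in (-Real.pi)..(-α), Fq J v θ) + (∫ θ in (-α)..α, Fq J v θ)
      + (∫ θ in α..Real.pi, Fq J v θ) = ∫ θ in (-Real.pi)..Real.pi, Fq J v θ := by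
    rw [intervalIntegral.integral_add_adjacent_intervals (hint _ _) (hint _ _),
      intervalIntegral.integral_add_adjacent_intervals (hint _ _) (hint _ _)]
  have hpos2 : 0 < ∫ θ in (-Real.pi)..(-α), Fq J v θ :=
    Fq_integral_pos v hv0 _ _ (by linarith)
  have hpos3 : 0 < ∫ θ in α..Real.pi, Fq J v θ :=
    Fq_integral_pos v hv0 _ _ (by linarith)
  have hσlt : σ < 1 := by
    rw [hIα, hIπ] at hsplit
    nlinarith
  exact ⟨hσpos, hσlt⟩
end

section
/- Let J ≥ 0 be an integer, let α be a real number, and let b : {−J,…,J} × {−J,…,J} → ℂ. Define u(θ_x, θ_d) := Σ_{m=−J}^{J} Σ_{n=−J}^{J} b_{mn} φ_m(θ_x) φ_n(θ_d), where φ_m(θ) = e^{imθ}/√(2π). For p, q ∈ {−J, …, J} define b^α_{pq} := ∫_{−α}^{α} ∫_{π−α}^{π+α} u(θ_x, θ_d) · conj(φ_p(θ_x) φ_q(θ_d)) dθ_d dθ_x. Then b^α_{pq} = Σ_{m=−J}^{J} Σ_{n=−J}^{J} p_{pm}(α) · b_{mn} · (−1)^{n−q} p_{nq}(α); equivalently,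 B^α = P(α) · B · P_d(α) as matrices, where B^α = (b^α_{pq}), B = (b_{mn}), P(α) is the prolate matrix, and P_d(α) has entries (−1)^{m−n} p_{mn}(α). -/
/-- The prolate matrix entry `p_{mn}(α) = (1/(2π)) ∫_{−α}^{α} e^{i(m−n)θ} dθ`. -/
noncomputable def prolate (α : ℝ) (m n : ℤ) : ℂ :=
  (1 / (2 * Real.pi) : ℂ) *
    ∫ θ in (-α)..α, Complex.exp (Complex.I * ((m : ℂ) - (n : ℂ)) * (θ : ℂ))

/-- The basis function `φ_m(θ) = e^{imθ}/√(2π)`. -/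
noncomputable def phi (m : ℤ) (θ : ℝ) : ℂ :=
  Complex.exp (Complex.I * (m : ℂ) * (θ : ℂ)) / (Real.sqrt (2 * Real.pi) : ℂ)

lemma sqrt_sq : ((Real.sqrt (2 * Real.pi) : ℂ)) * ((Real.sqrt (2 * Real.pi) : ℂ))
    = ((2 * Real.pi : ℝ) : ℂ) := by
  rw [← Complex.ofReal_mul, Real.mul_self_sqrt (by positivity)]

lemma phi_mul_conj (m k : ℤ) (θ : ℝ) :
    phi m θ * starRingEnd ℂ (phi k θ)
      = Complex.exp (Complex.I * ((m : ℂ) - (k : ℂ)) * (θ : ℂ)) / (2 * Real.pi) := by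
  unfold phi
  rw [map_div₀, ← Complex.exp_conj]
  have h1 : starRingEnd ℂ (Complex.I * (k : ℂ) * (θ : ℂ)) = -(Complex.I * (k : ℂ) * (θ : ℂ)) := by
    simp [Complex.conj_ofReal]
  rw [h1]
  have h2 : starRingEnd ℂ ((Real.sqrt (2 * Real.pi) : ℂ)) = (Real.sqrt (2 * Real.pi) : ℂ) :=
    Complex.conj_ofReal _
  rw [h2, div_mul_div_comm, ← Complex.exp_add, sqrt_sq]
  push_cast
  ring_nf

lemma cont_phi_conj (m k : ℤ) :
    Continuous fun θ : ℝ => phi m θ * starRingEnd ℂ (phi k θ) := by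
  simp only [phi_mul_conj]
  fun_prop

lemma integral_A (α : ℝ) (m k : ℤ) :
    (∫ θ in (-α)..α, phi m θ * starRingEnd ℂ (phi k θ)) = prolate α k m := by
  simp only [phi_mul_conj]
  rw [intervalIntegral.integral_div]
  unfold prolate
  rw [div_eq_mul_one_div, mul_comm]
  congr 1
  have := intervalIntegral.integral_comp_neg (a := -α) (b := α)
    (fun θ : ℝ => Complex.exp (Complex.I * ((k : ℂ) - (m : ℂ)) * (θ : ℂ)))
  simp only [neg_neg] at this
  rw [← this]
  refine intervalIntegral.integral_congr fun θ _ => ?_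
  push_cast
  ring_nf

lemma integral_D (α : ℝ) (n q : ℤ) :
    (∫ θ in (Real.pi - α)..(Real.pi + α), phi n θ * starRingEnd ℂ (phi q θ))
      = (-1 : ℂ) ^ (n - q) * prolate α n q := by
  simp only [phi_mul_conj]
  have key := intervalIntegral.integral_comp_add_right (a := -α) (b := α) (d := Real.pi)
    (fun θ : ℝ => Complex.exp (Complex.I * ((n : ℂ) - (q : ℂ)) * (θ : ℂ)) / (2 * Real.pi))
  have h1 : -α + Real.pi = Real.pi - α := by ring
  have h2 : α + Real.pi = Real.pi + α := by ring
  rw [h1, h2] at key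
  rw [← key]
  have h3 : ∀ θ : ℝ,
      Complex.exp (Complex.I * ((n : ℂ) - (q : ℂ)) * ((θ + Real.pi : ℝ) : ℂ)) / (2 * Real.pi)
      = ((-1 : ℂ) ^ (n - q)) *
        (Complex.exp (Complex.I * ((n : ℂ) - (q : ℂ)) * (θ : ℂ)) / (2 * Real.pi)) := by
    intro θ
    have : Complex.I * ((n : ℂ) - (q : ℂ)) * ((θ + Real.pi : ℝ) : ℂ)
        = Complex.I * ((n : ℂ) - (q : ℂ)) * (θ : ℂ)
          + ((n - q : ℤ) : ℂ) * ((Real.pi : ℂ) * Complex.I) := by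
      push_cast; ring
    rw [this, Complex.exp_add, Complex.exp_int_mul, Complex.exp_pi_mul_I]
    ring
  simp only [h3]
  rw [intervalIntegral.integral_const_mul]
  congr 1
  rw [intervalIntegral.integral_div]
  unfold prolate
  rw [div_eq_mul_one_div, mul_comm]

/-- With `u(θ_x, θ_d) = Σ_m Σ_n b_{mn} φ_m(θ_x) φ_n(θ_d)` and
`b^α_{pq} = ∫_{−α}^{α} ∫_{π−α}^{π+α} u(θ_x, θ_d) conj(φ_p(θ_x) φ_q(θ_d)) dθ_d dθ_x`,
one has `b^α_{pq} = Σ_m Σ_n p_{pm}(α) b_{mn} (−1)^{n−q} p_{nq}(α)`, i.e.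
`B^α = P(α) B P_d(α)` entrywise. -/
theorem stmt_11 (J : ℕ) (α : ℝ) (b : ℤ → ℤ → ℂ) (p q : ℤ)
    (hp : p ∈ Finset.Icc (-(J : ℤ)) (J : ℤ)) (hq : q ∈ Finset.Icc (-(J : ℤ)) (J : ℤ)) :
    (∫ θx in (-α)..α, ∫ θd in (Real.pi - α)..(Real.pi + α),
        (∑ m ∈ Finset.Icc (-(J : ℤ)) (J : ℤ), ∑ n ∈ Finset.Icc (-(J : ℤ)) (J : ℤ),
            b m n * phi m θx * phi n θd) *
          starRingEnd ℂ (phi p θx * phi q θd))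
      = ∑ m ∈ Finset.Icc (-(J : ℤ)) (J : ℤ), ∑ n ∈ Finset.Icc (-(J : ℤ)) (J : ℤ),
          prolate α p m * b m n * ((-1 : ℂ) ^ (n - q) * prolate α n q) := by
  set S := Finset.Icc (-(J : ℤ)) (J : ℤ) with hS
  calc (∫ θx in (-α)..α, ∫ θd in (Real.pi - α)..(Real.pi + α),
        (∑ m ∈ S, ∑ n ∈ S, b m n * phi m θx * phi n θd) *
          starRingEnd ℂ (phi p θx * phi q θd))
      = ∫ θx in (-α)..α, ∫ θd in (Real.pi - α)..(Real.pi + α),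
          ∑ m ∈ S, ∑ n ∈ S,
            (b m n * (phi m θx * starRingEnd ℂ (phi p θx))) *
              (phi n θd * starRingEnd ℂ (phi q θd)) := by
        refine intervalIntegral.integral_congr fun θx _ => ?_
        refine intervalIntegral.integral_congr fun θd _ => ?_
        rw [Finset.sum_mul]
        refine Finset.sum_congr rfl fun m _ => ?_
        rw [Finset.sum_mul]
        refine Finset.sum_congr rfl fun n _ => ?_
        rw [map_mul]; ring
    _ = ∫ θx in (-α)..α, ∑ m ∈ S, ∑ n ∈ S,
          (b m n * (phi m θx * starRingEnd ℂ (phi p θx))) *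
            ∫ θd in (Real.pi - α)..(Real.pi + α),
              phi n θd * starRingEnd ℂ (phi q θd) := by
        refine intervalIntegral.integral_congr fun θx _ => ?_
        rw [intervalIntegral.integral_finset_sum]
        · refine Finset.sum_congr rfl fun m _ => ?_
          rw [intervalIntegral.integral_finset_sum]
          · exact Finset.sum_congr rfl fun n _ => intervalIntegral.integral_const_mul _ _
          · intro n _
            exact ((continuous_const.mul (cont_phi_conj n q))).intervalIntegrable _ _
        · intro m _
          refine Continuous.intervalIntegrable ?_ _ _
          exact continuous_finset_sum _ fun n _ => continuous_const.mul (cont_phi_conj n q)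
    _ = ∑ m ∈ S, ∑ n ∈ S,
          (b m n * ∫ θx in (-α)..α, phi m θx * starRingEnd ℂ (phi p θx)) *
            ∫ θd in (Real.pi - α)..(Real.pi + α),
              phi n θd * starRingEnd ℂ (phi q θd) := by
        rw [intervalIntegral.integral_finset_sum]
        · refine Finset.sum_congr rfl fun m _ => ?_
          rw [intervalIntegral.integral_finset_sum]
          · refine Finset.sum_congr rfl fun n _ => ?_
            rw [intervalIntegral.integral_mul_const, intervalIntegral.integral_const_mul]
          · intro n _
            exact ((continuous_const.mul (cont_phi_conj m p)).mul continuous_const).intervalIntegrable _ _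
        · intro m _
          refine Continuous.intervalIntegrable ?_ _ _
          exact continuous_finset_sum _ fun n _ =>
            (continuous_const.mul (cont_phi_conj m p)).mul continuous_const
    _ = ∑ m ∈ S, ∑ n ∈ S, prolate α p m * b m n * ((-1 : ℂ) ^ (n - q) * prolate α n q) := by
        refine Finset.sum_congr rfl fun m _ => Finset.sum_congr rfl fun n _ => ?_
        rw [integral_A, integral_D]
        ring
end
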